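/- arXiv:1802.04172 — 3 statements merged into one kernel-verified Lean document; each statement's English description precedes it below -/
import Mathlib

section
/- Let K, t, L be positive integers with L dividing K and L dividing t, t < K, and K' = K/L, t' = t/L with t' < K'. Then the ratio of ungrouped to grouped subpacketization satisfies t·C(K,t) / (t'·C(K',t')) ≥ L, i.e., the group-based scheme reduces the required subpacketization by at least a factor of L. -/
lemma choose_le_choose_add (n k d : ℕ) : n.choose k ≤ (n + d).choose (k + d) := by
  induction d with
  | zero => simp
  | succ d ih =>
      calc n.choose k ≤ (n + d).choose (k + d) := ih
        _ ≤ (n + d).choose (k + d) + (n + d).choose (k + d + 1) := Nat.le_add_right _ _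
        _ = (n + d + 1).choose (k + d + 1) := (Nat.choose_succ_succ _ _).symm

theorem subpacketization_ratio_ge_L (K t L K' t' : ℕ) (hL : 0 < L)
    (hLK : L ∣ K) (hLt : L ∣ t) (ht : 0 < t) (htK : t < K)
    (hK' : K' = K / L) (ht' : t' = t / L) (ht'K' : t' < K') (ht'pos : 0 < t') :
    (L : ℝ) ≤ ((t * Nat.choose K t : ℕ) : ℝ) / ((t' * Nat.choose K' t' : ℕ) : ℝ) := by
  have htL : t = L * t' := by rw [ht']; exact (Nat.mul_div_cancel' hLt).symm
  have hKL : K = L * K' := by rw [hK']; exact (Nat.mul_div_cancel' hLK).symm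
  -- choose inequality
  have hcc : Nat.choose K' t' ≤ Nat.choose K t := by
    have h1 : Nat.choose K' t' ≤ Nat.choose (K' + (t - t')) (t' + (t - t')) :=
      choose_le_choose_add _ _ _
    have ht'le : t' ≤ t := by
      rw [htL]; exact Nat.le_mul_of_pos_left _ hL
    have h2 : t' + (t - t') = t := by omega
    have h3 : K' + (t - t') ≤ K := by
      -- K' + t - t' ≤ K ⟺ (L-1)(K'-t') ≥ 0
      have : K' + t ≤ K + t' := by
        rw [htL, hKL]
        have h4 : t' ≤ K' := le_of_lt ht'K'
        nlinarith [Nat.one_le_iff_ne_zero.mpr (Nat.pos_iff_ne_zero.mp hL)]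
      omega
    calc Nat.choose K' t' ≤ Nat.choose (K' + (t - t')) (t' + (t - t')) := h1
      _ = Nat.choose (K' + (t - t')) t := by rw [h2]
      _ ≤ Nat.choose K t := Nat.choose_le_choose t h3
  have hnat : L * (t' * Nat.choose K' t') ≤ t * Nat.choose K t := by
    calc L * (t' * Nat.choose K' t') = t * Nat.choose K' t' := by rw [htL, mul_assoc]
      _ ≤ t * Nat.choose K t := Nat.mul_le_mul_left t hcc
  have hden : (0 : ℝ) < ((t' * Nat.choose K' t' : ℕ) : ℝ) := by
    have : 0 < t' * Nat.choose K' t' :=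
      Nat.mul_pos ht'pos (Nat.choose_pos (le_of_lt ht'K'))
    exact_mod_cast this
  rw [le_div_iff₀ hden]
  calc (L : ℝ) * ((t' * Nat.choose K' t' : ℕ) : ℝ)
      = ((L * (t' * Nat.choose K' t') : ℕ) : ℝ) := by push_cast; ring
    _ ≤ ((t * Nat.choose K t : ℕ) : ℝ) := by exact_mod_cast hnat
end

section
/- Define K̄(S_max, γ) = max{K : Kγ·C(K,Kγ) ≤ S_max and Kγ ∈ ℕ} and K̄_L(S_max, γ) = max{K : (Kγ/L)·C(K/L, Kγ/L) ≤ S_max, with L | K and Kγ/L ∈ ℕ}. Then for any L ≥ 1 such that both sets are nonempty, K̄_L(S_max, γ) ≥ K̄(S_max, γ) whenever L divides K̄(S_max,γ) and L divides K̄(S_max,γ)·γ; hence the achievable coding gain t̄_L = γ·K̄_L is at least t̄ = γ·K̄. -/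
lemma vand_le (m n a b : ℕ) :
    m.choose a * n.choose b ≤ (m + n).choose (a + b) := by
  rw [Nat.add_choose_eq]
  exact Finset.single_le_sum (f := fun ij : ℕ × ℕ => m.choose ij.1 * n.choose ij.2)
    (fun _ _ => Nat.zero_le _) (a := ((a,b) : ℕ × ℕ)) (Finset.HasAntidiagonal.mem_antidiagonal.mpr rfl)

lemma choose_mul_le (m b : ℕ) (hb : b ≤ m) : ∀ L, 1 ≤ L →
    m.choose b ≤ (L * m).choose (L * b) := by
  intro L
  induction L with
  | zero => omega
  | succ L ih =>
    intro _
    rcases Nat.eq_zero_or_pos L with rfl | hLp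
    · simp
    · have h1 := ih hLp
      have h2 : (L * m).choose (L * b) * m.choose b ≤
          ((L+1) * m).choose ((L+1) * b) := by
        calc (L * m).choose (L * b) * m.choose b ≤ (L*m + m).choose (L*b + b) :=
              vand_le (L * m) m (L * b) b
          _ = ((L+1) * m).choose ((L+1) * b) := by ring_nf
      have hpos : 1 ≤ (L * m).choose (L * b) :=
        Nat.choose_pos (Nat.mul_le_mul_left L hb)
      calc m.choose b = 1 * m.choose b := (one_mul _).symm
        _ ≤ (L * m).choose (L * b) * m.choose b := Nat.mul_le_mul_right _ hpos
        _ ≤ ((L+1) * m).choose ((L+1) * b) := h2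

theorem grouping_increases_coding_gain (Smax L : ℕ) (γ : ℚ) (hγ0 : 0 < γ) (hγ1 : γ < 1)
    (hL : 1 ≤ L) (Kbar KbarL : ℕ)
    (hKbar : IsGreatest {K : ℕ | ∃ t : ℕ, (t : ℚ) = γ * K ∧ t * Nat.choose K t ≤ Smax} Kbar)
    (hKbarL : IsGreatest {K : ℕ | L ∣ K ∧ ∃ t' : ℕ, ((t' : ℚ) * L = γ * K ∧
        t' * Nat.choose (K / L) t' ≤ Smax)} KbarL)
    (hdvd : L ∣ Kbar) (hdvdt : ∃ t' : ℕ, ((L : ℚ) * t' = γ * Kbar)) :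
    Kbar ≤ KbarL ∧ γ * Kbar ≤ γ * KbarL := by
  obtain ⟨t, ht, hts⟩ := hKbar.1
  obtain ⟨t', ht'⟩ := hdvdt
  obtain ⟨m, rfl⟩ := hdvd
  have hLpos : 0 < L := hL
  have htt' : t = L * t' := by
    have : (t : ℚ) = (L : ℚ) * t' := by rw [ht, ht']
    exact_mod_cast this
  have hdiv : L * m / L = m := Nat.mul_div_cancel_left m hLpos
  -- t' ≤ m
  have ht'm : t' ≤ m := by
    rcases Nat.eq_zero_or_pos m with rfl | hm
    · have : (L : ℚ) * t' = 0 := by simpa using ht'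
      have : (t' : ℚ) = 0 := by
        rcases mul_eq_zero.mp this with h | h
        · exfalso; exact_mod_cast absurd h (by positivity)
        · exact h
      have : t' = 0 := by exact_mod_cast this
      omega
    · have hK : (0 : ℚ) < (L * m : ℕ) := by
        exact_mod_cast Nat.mul_pos hLpos hm
      have htK : (t : ℚ) < (L * m : ℕ) := by
        rw [ht]
        calc γ * ((L * m : ℕ) : ℚ) < 1 * ((L * m : ℕ) : ℚ) := by
              exact mul_lt_mul_of_pos_right hγ1 hK
          _ = ((L * m : ℕ) : ℚ) := one_mul _
      have : t < L * m := by exact_mod_cast htK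
      rw [htt'] at this
      exact Nat.le_of_lt_succ (by nlinarith)
  have hmem : (L * m) ∈ {K : ℕ | L ∣ K ∧ ∃ t' : ℕ, ((t' : ℚ) * L = γ * K ∧
        t' * Nat.choose (K / L) t' ≤ Smax)} := by
    refine ⟨⟨m, rfl⟩, t', by rw [mul_comm]; exact ht', ?_⟩
    rw [hdiv]
    calc t' * m.choose t' ≤ (L * t') * ((L * m).choose (L * t')) := by
          exact Nat.mul_le_mul (Nat.le_mul_of_pos_left t' hLpos)
            (choose_mul_le m t' ht'm L hL)
      _ = t * (L * m).choose t := by rw [htt']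
      _ ≤ Smax := hts
  have h1 : L * m ≤ KbarL := hKbarL.2 hmem
  exact ⟨h1, mul_le_mul_of_nonneg_left (by exact_mod_cast h1) hγ0.le⟩
end

section
/- In the shuffle phase of the group-based scheme, the collection of intermediate values {W^{G_p(j)}_{Q\{p\}, i}} transmitted over all subsets Q ⊆ [K'] with |Q| = t'+1, all i ∈ Q, all p ∈ Q\{i}, and all j ∈ [L], covers exactly once every intermediate value W^q_{τ,σ} needed by a node q that did not map packet W_{τ,σ}; i.e., each node q in group G_p receives each missing intermediate value W^q_{τ,σ} with p ∉ τ exactly once. -/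
theorem shuffle_delivery_bijection (K' t' : ℕ) (ht' : 0 < t') (ht'K' : t' < K') :
    Set.BijOn (fun x : Finset ℕ × ℕ × ℕ => (x.1.erase x.2.2, x.2.1, x.2.2))
      {x : Finset ℕ × ℕ × ℕ | x.1 ⊆ Finset.range K' ∧ x.1.card = t' + 1 ∧
        x.2.1 ∈ x.1 ∧ x.2.2 ∈ x.1 ∧ x.2.1 ≠ x.2.2}
      {y : Finset ℕ × ℕ × ℕ | y.1 ⊆ Finset.range K' ∧ y.1.card = t' ∧
        y.2.1 ∈ y.1 ∧ y.2.2 ∈ Finset.range K' ∧ y.2.2 ∉ y.1} := by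
  refine ⟨?_, ?_, ?_⟩
  · rintro ⟨Q, i, p⟩ ⟨hQ, hcard, hi, hp, hip⟩
    refine ⟨(Finset.erase_subset _ _).trans hQ, ?_, Finset.mem_erase.2 ⟨hip, hi⟩,
      hQ hp, Finset.notMem_erase _ _⟩
    simp only at hp hcard ⊢
    rw [Finset.card_erase_of_mem hp, hcard]; rfl
  · rintro ⟨Q, i, p⟩ ⟨hQ, hcard, hi, hp, hip⟩ ⟨Q', i', p'⟩ ⟨hQ', hcard', hi', hp', hip'⟩ h
    simp only [Prod.mk.injEq] at h
    obtain ⟨he, hie, hpe⟩ := h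
    subst hie hpe
    have : Q = Q' := by
      simp only at hp hp'
      rw [← Finset.insert_erase hp, ← Finset.insert_erase hp', he]
    simp [this]
  · rintro ⟨τ, σ, p⟩ ⟨hτ, hcard, hσ, hp, hpτ⟩
    refine ⟨⟨insert p τ, σ, p⟩, ⟨?_, ?_, ?_, Finset.mem_insert_self _ _, ?_⟩, ?_⟩
    · exact Finset.insert_subset hp hτ
    · rw [Finset.card_insert_of_notMem hpτ, hcard]
    · exact Finset.mem_insert_of_mem hσ
    · exact fun h => hpτ (h ▸ hσ)
    · simp [Finset.erase_insert hpτ]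
end
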